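/- arXiv:1905.13336 — 3 statements merged into one kernel-verified Lean document; each statement's English description precedes it below -/
import Mathlib

section
/- For ν ≥ 1 the function p ↦ 1 − p^ν − ν p^ν(1−p) − (ν(ν+1)/2)(1−p)² is increasing on [0,1] and vanishes at p = 1. -/
theorem nb_aux_increasing (ν : ℝ) (hν : 1 ≤ ν) :
    MonotoneOn (fun p : ℝ => 1 - p ^ ν - ν * p ^ ν * (1 - p) - ν * (ν + 1) / 2 * (1 - p) ^ 2)
      (Set.Icc 0 1) ∧
    (1 : ℝ) - (1 : ℝ) ^ ν - ν * (1 : ℝ) ^ ν * (1 - 1) - ν * (ν + 1) / 2 * (1 - 1) ^ 2 = 0 := by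
  have hrpow : Continuous fun p : ℝ => p ^ ν := by
    rw [continuous_iff_continuousAt]
    intro x
    exact Real.continuousAt_rpow_const x ν (Or.inr (by linarith))
  have hD : ∀ x ∈ Set.Ioo (0:ℝ) 1,
      HasDerivAt (fun p : ℝ => 1 - p ^ ν - ν * p ^ ν * (1 - p) - ν * (ν + 1) / 2 * (1 - p) ^ 2)
        ((0 - ν * x ^ (ν - 1)) - (ν * (ν * x ^ (ν - 1)) * (1 - x) + ν * x ^ ν * (0 - 1))
          - ν * (ν + 1) / 2 * (2 * (1 - x) ^ 1 * (0 - 1))) x := by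
    intro x hx
    have hp : HasDerivAt (fun p : ℝ => p ^ ν) (ν * x ^ (ν - 1)) x :=
      Real.hasDerivAt_rpow_const (Or.inl hx.1.ne')
    have h1 : HasDerivAt (fun p : ℝ => 1 - p) (0 - 1) x :=
      (hasDerivAt_const x (1:ℝ)).sub (hasDerivAt_id x)
    have h2 : HasDerivAt (fun p : ℝ => ν * p ^ ν * (1 - p))
        (ν * (ν * x ^ (ν - 1)) * (1 - x) + ν * x ^ ν * (0 - 1)) x :=
      (hp.const_mul ν).mul h1
    have h3 : HasDerivAt (fun p : ℝ => ν * (ν + 1) / 2 * (1 - p) ^ 2)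
        (ν * (ν + 1) / 2 * (2 * (1 - x) ^ 1 * (0 - 1))) x := by
      have := (h1.pow 2).const_mul (ν * (ν + 1) / 2)
      simpa using this
    exact (((hasDerivAt_const x (1:ℝ)).sub hp).sub h2).sub h3
  constructor
  · apply monotoneOn_of_deriv_nonneg (convex_Icc 0 1)
    · exact Continuous.continuousOn (by
        exact ((continuous_const.sub hrpow).sub
          ((continuous_const.mul hrpow).mul (continuous_const.sub continuous_id))).sub
          (continuous_const.mul ((continuous_const.sub continuous_id).pow 2)))
    · intro x hx
      rw [interior_Icc] at hx
      exact (hD x hx).differentiableAt.differentiableWithinAt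
    · intro x hx
      rw [interior_Icc] at hx
      rw [(hD x hx).deriv]
      have hle : x ^ (ν - 1) ≤ 1 :=
        Real.rpow_le_one hx.1.le hx.2.le (by linarith)
      have hnn : (0:ℝ) ≤ x ^ (ν - 1) := Real.rpow_nonneg hx.1.le _
      have hxν : x ^ ν = x ^ (ν - 1) * x := by
        rw [← Real.rpow_add_one hx.1.ne', sub_add_cancel]
      rw [hxν]
      have key : 0 ≤ ν * (ν + 1) * (1 - x) * (1 - x ^ (ν - 1)) := by
        apply mul_nonneg
        apply mul_nonneg
        apply mul_nonneg <;> linarith [hx.2.le]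
        · linarith [hx.2.le]
        · linarith
      nlinarith [key]
  · simp
end

section
/- Let c > 1, k > 0, and a, b ≥ 0 not both zero. The function X̂_t = a − (1/log c)·log( (c^b − 1 + c^{−kt}(1 − c^{−a})) / (c^b − c^{−a}) ) satisfies X̂_0 = a and dX̂_t/dt = k(1 − c^{X̂_t})/(1 − c^{a+b+kt}) for all t ≥ 0, and is the unique solution of this initial value problem on [0,∞). -/
/-- `X̂_t = a − (1/log c) log((c^b − 1 + c^{−kt}(1 − c^{−a}))/(c^b − c^{−a}))`. -/
noncomputable def Xhat (c k a b t : ℝ) : ℝ :=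
  a - (1 / Real.log c) *
    Real.log ((c ^ b - 1 + c ^ (-(k * t)) * (1 - c ^ (-a))) / (c ^ b - c ^ (-a)))

/-!
With `s = a + b`, the substitution `u = c^(-X)` turns the equation into the linear one
`u' = k log c · (u - 1) / (c^(s + kt) - 1)`, whose homogeneous part is also solved by
`h(t) = c^(-kt) - c^s = c^(-kt) (1 - c^(s + kt))`. Hence `(c^(-X) - 1) / h` is constant along
every solution on `[0, ∞)`, where `h` does not vanish; this gives uniqueness. Existence: `X̂` is
`-log_c (1 + C h)` with `C = (1 - c^(-a)) / (c^s - 1)`, the value of that constant at `X̂_0 = a`.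
-/

open Real

noncomputable def odeInvariant (c k s : ℝ) (Y : ℝ → ℝ) (t : ℝ) : ℝ :=
  (c ^ (-Y t) - 1) / (c ^ (-(k * t)) - c ^ s)

section ODE

variable {c k s : ℝ}

lemma one_lt_rpow_add_mul (hc : 1 < c) (hk : 0 < k) (hs : 0 < s) {t : ℝ} (ht : 0 ≤ t) :
    1 < c ^ (s + k * t) :=
  one_lt_rpow hc (by positivity)

lemma rpow_neg_mul_sub_rpow (hc : 0 < c) (t : ℝ) :
    c ^ (-(k * t)) - c ^ s = c ^ (-(k * t)) * (1 - c ^ (s + k * t)) := by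
  rw [mul_one_sub, ← rpow_add hc]
  ring_nf

lemma rpow_neg_mul_sub_rpow_ne_zero (hc : 0 < c) {t : ℝ} (hS : c ^ (s + k * t) ≠ 1) :
    c ^ (-(k * t)) - c ^ s ≠ 0 := by
  rw [rpow_neg_mul_sub_rpow hc]
  exact mul_ne_zero (rpow_pos_of_pos hc _).ne' (sub_ne_zero.mpr hS.symm)

lemma hasDerivAt_rpow_neg_mul (hc : 0 < c) (t : ℝ) :
    HasDerivAt (fun t => c ^ (-(k * t))) (-(log c * k) * c ^ (-(k * t))) t := by
  convert ((hasDerivAt_id' t).const_mul k).fun_neg.const_rpow hc using 1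
  ring

lemma hasDerivAt_odeInvariant (hc : 0 < c) {Y : ℝ → ℝ} {t : ℝ} (hS : c ^ (s + k * t) ≠ 1)
    (hY : HasDerivAt Y (k * (1 - c ^ Y t) / (1 - c ^ (s + k * t))) t) :
    HasDerivAt (odeInvariant c k s Y) 0 t := by
  refine ((hY.fun_neg.const_rpow hc |>.sub_const 1).div
    ((hasDerivAt_rpow_neg_mul hc t).sub_const (c ^ s))
    (rpow_neg_mul_sub_rpow_ne_zero hc hS)).congr_deriv ?_
  rw [rpow_neg_mul_sub_rpow hc, rpow_neg hc.le (Y t)]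
  field_simp
  ring

lemma odeInvariant_eq_of_nonneg (hc : 1 < c) (hk : 0 < k) (hs : 0 < s) {Y : ℝ → ℝ}
    (hY : ∀ t ≥ 0, HasDerivAt Y (k * (1 - c ^ Y t) / (1 - c ^ (s + k * t))) t)
    {t : ℝ} (ht : 0 ≤ t) :
    odeInvariant c k s Y t = odeInvariant c k s Y 0 := by
  have hI : ∀ x ≥ 0, HasDerivAt (odeInvariant c k s Y) 0 x := fun x hx =>
    hasDerivAt_odeInvariant (by linarith) (one_lt_rpow_add_mul hc hk hs hx).ne' (hY x hx)
  exact constant_of_has_deriv_right_zero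
    (fun x hx => (hI x hx.1).continuousAt.continuousWithinAt)
    (fun x hx => (hI x hx.1).hasDerivWithinAt) t ⟨ht, le_rfl⟩

theorem eq_of_hasDerivAt_ode (hc : 1 < c) (hk : 0 < k) (hs : 0 < s) {Y Z : ℝ → ℝ}
    (h0 : Y 0 = Z 0)
    (hY : ∀ t ≥ 0, HasDerivAt Y (k * (1 - c ^ Y t) / (1 - c ^ (s + k * t))) t)
    (hZ : ∀ t ≥ 0, HasDerivAt Z (k * (1 - c ^ Z t) / (1 - c ^ (s + k * t))) t)
    {t : ℝ} (ht : 0 ≤ t) :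
    Y t = Z t := by
  have hc0 : 0 < c := by linarith
  have hI : odeInvariant c k s Y t = odeInvariant c k s Z t := by
    rw [odeInvariant_eq_of_nonneg hc hk hs hY ht, odeInvariant_eq_of_nonneg hc hk hs hZ ht,
      odeInvariant, odeInvariant, h0]
  have hpow : c ^ (-Y t) = c ^ (-Z t) := by
    simpa using (div_left_inj'
      (rpow_neg_mul_sub_rpow_ne_zero hc0 (one_lt_rpow_add_mul hc hk hs ht).ne')).mp hI
  exact neg_inj.mp ((rpow_right_inj hc0 hc.ne').mp hpow)

lemma hasDerivAt_neg_logb_linear (hc : 0 < c) (hc1 : c ≠ 1) (C : ℝ) {t : ℝ}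
    (hS : c ^ (s + k * t) ≠ 1) (hu : 0 < 1 + C * (c ^ (-(k * t)) - c ^ s)) :
    HasDerivAt (fun t => -logb c (1 + C * (c ^ (-(k * t)) - c ^ s)))
      (k * (1 - c ^ (-logb c (1 + C * (c ^ (-(k * t)) - c ^ s)))) / (1 - c ^ (s + k * t)))
      t := by
  have hL : log c ≠ 0 := log_ne_zero_of_pos_of_ne_one hc hc1
  have hu' := (((hasDerivAt_rpow_neg_mul (k := k) hc t).sub_const (c ^ s)).const_mul C).const_add 1
  refine ((hu'.log hu.ne').div_const (log c)).fun_neg.congr_deriv ?_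
  rw [rpow_neg hc.le (logb c _), rpow_logb hc hc1 hu]
  have hS' : 1 - c ^ (s + k * t) ≠ 0 := sub_ne_zero.mpr hS.symm
  rw [rpow_neg_mul_sub_rpow hc] at hu ⊢
  generalize c ^ (-(k * t)) = x, c ^ (s + k * t) = S at hu hS' ⊢
  generalize hu_def : 1 + C * (x * (1 - S)) = u at hu ⊢
  have hu0 := hu.ne'
  field_simp
  linear_combination k * hu_def

end ODE

lemma Xhat_zero (c k a b : ℝ) : Xhat c k a b 0 = a := by
  simp [Xhat]

section Xhat

variable {c k a b : ℝ}

lemma rpow_sub_one_add_mul_pos (hc : 1 < c) (ha : 0 ≤ a) (hb : 0 ≤ b) (hab : 0 < a + b)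
    {x : ℝ} (hx : 0 < x) :
    0 < c ^ b - 1 + x * (1 - c ^ (-a)) := by
  have hca : c ^ (-a) ≤ 1 := rpow_le_one_of_one_le_of_nonpos hc.le (by linarith)
  rcases hb.eq_or_lt with rfl | hb
  · have : c ^ (-a) < 1 := rpow_lt_one_of_one_lt_of_neg hc (by linarith)
    rw [rpow_zero, sub_self, zero_add]
    exact mul_pos hx (by linarith)
  · have : 1 < c ^ b := one_lt_rpow hc hb
    nlinarith

lemma Xhat_arg_eq (hc : 0 < c) (hab : c ^ (a + b) ≠ 1) (x : ℝ) :
    (c ^ b - 1 + x * (1 - c ^ (-a))) / (c ^ b - c ^ (-a))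
      = c ^ a * (1 + (1 - c ^ (-a)) / (c ^ (a + b) - 1) * (x - c ^ (a + b))) := by
  rw [rpow_add hc] at hab ⊢
  rw [rpow_neg hc.le]
  have hp : c ^ a ≠ 0 := (rpow_pos_of_pos hc a).ne'
  generalize c ^ a = p, c ^ b = q at hab hp ⊢
  have hqp : q * p - 1 ≠ 0 := sub_ne_zero.mpr (by rwa [mul_comm])
  have hA : q - p⁻¹ ≠ 0 := by
    contrapose! hqp
    field_simp at hqp
    linarith
  field_simp
  ring

lemma one_add_div_mul_pos (hc : 1 < c) (ha : 0 ≤ a) (hb : 0 ≤ b) (hab : 0 < a + b) (t : ℝ) :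
    0 < 1 + (1 - c ^ (-a)) / (c ^ (a + b) - 1) * (c ^ (-(k * t)) - c ^ (a + b)) := by
  have hc0 : 0 < c := by linarith
  have hA : 0 < c ^ b - c ^ (-a) := sub_pos.mpr (rpow_lt_rpow_of_exponent_lt hc (by linarith))
  have hN := rpow_sub_one_add_mul_pos hc ha hb hab (rpow_pos_of_pos hc0 (-(k * t)))
  have h := div_pos hN hA
  rw [Xhat_arg_eq hc0 (one_lt_rpow hc hab).ne'] at h
  exact pos_of_mul_pos_right h (rpow_pos_of_pos hc0 a).le

lemma Xhat_eq_neg_logb (hc : 1 < c) (ha : 0 ≤ a) (hb : 0 ≤ b) (hab : 0 < a + b) (t : ℝ) :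
    Xhat c k a b t =
      -logb c (1 + (1 - c ^ (-a)) / (c ^ (a + b) - 1) * (c ^ (-(k * t)) - c ^ (a + b))) := by
  have hc0 : 0 < c := by linarith
  have hL : log c ≠ 0 := (log_pos hc).ne'
  rw [Xhat, Xhat_arg_eq hc0 (one_lt_rpow hc hab).ne', log_mul (rpow_pos_of_pos hc0 a).ne'
    (one_add_div_mul_pos hc ha hb hab t).ne', log_rpow hc0, logb]
  field_simp
  ring

lemma hasDerivAt_Xhat (hc : 1 < c) (hk : 0 < k) (ha : 0 ≤ a) (hb : 0 ≤ b) (hab : 0 < a + b)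
    {t : ℝ} (ht : 0 ≤ t) :
    HasDerivAt (Xhat c k a b) (k * (1 - c ^ Xhat c k a b t) / (1 - c ^ (a + b + k * t))) t := by
  rw [funext (Xhat_eq_neg_logb hc ha hb hab)]
  exact hasDerivAt_neg_logb_linear (by linarith) hc.ne' _
    (one_lt_rpow_add_mul hc hk hab ht).ne' (one_add_div_mul_pos hc ha hb hab t)

end Xhat

theorem qpolya_ode (c k a b : ℝ) (hc : 1 < c) (hk : 0 < k) (ha : 0 ≤ a) (hb : 0 ≤ b)
    (hab : 0 < a + b) :
    Xhat c k a b 0 = a ∧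
    (∀ t ≥ (0 : ℝ),
      HasDerivAt (fun t => Xhat c k a b t)
        (k * (1 - c ^ Xhat c k a b t) / (1 - c ^ (a + b + k * t))) t) ∧
    (∀ Y : ℝ → ℝ, Y 0 = a →
      (∀ t ≥ (0 : ℝ), HasDerivAt Y (k * (1 - c ^ Y t) / (1 - c ^ (a + b + k * t))) t) →
      ∀ t ≥ (0 : ℝ), Y t = Xhat c k a b t) := by
  have hX : ∀ t ≥ (0 : ℝ), HasDerivAt (Xhat c k a b)
      (k * (1 - c ^ Xhat c k a b t) / (1 - c ^ (a + b + k * t))) t :=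
    fun t ht => hasDerivAt_Xhat hc hk ha hb hab ht
  exact ⟨Xhat_zero c k a b, hX, fun Y hY0 hY t ht =>
    eq_of_hasDerivAt_ode hc hk hab (hY0.trans (Xhat_zero c k a b).symm) hY hX ht⟩
end

section
/- Consider the q-Pólya urn with q > 1, k ≥ 1, starting with r = ∞ white balls and s ∈ ℕ black balls, where a white ball is drawn with probability q^{−b} when b black balls are present (and black with probability 1 − q^{−b}), and k balls of the drawn color are added. Let X_n be the number of white draws in the first n draws. Then P(X_n = x) = q^{−sx} (1 − q^{−k})^{n−x} [ (s/k) + n − x − 1 choose n − x ]_{q^{−k}} · [n]_{q^{−k}}! / [x]_{q^{−k}}! for all x ∈ {0,…,n}. -/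
/-- `urnW q s k n x` is `P(X_n = x)` for the q-Pólya urn with infinitely many white balls
and initially `s` black balls: if `b` black balls are present, a white ball is drawn with
probability `q^{-b}` (and then nothing is added to the finitely many black balls), otherwise
a black is drawn and `k` black balls are added. After `n` draws with `x` whites among them,
there are `s + k(n-x)` black balls. -/
noncomputable def urnW (q : ℝ) (s k : ℕ) : ℕ → ℕ → ℝ
  | 0, x => if x = 0 then 1 else 0
  | n + 1, 0 => urnW q s k n 0 * (1 - q ^ (-((s : ℤ) + (k : ℤ) * (n : ℤ))))
  | n + 1, x + 1 =>
      urnW q s k n (x + 1) *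
          (1 - q ^ (-((s : ℤ) + (k : ℤ) * ((n : ℤ) - ((x : ℤ) + 1))))) +
        urnW q s k n x * q ^ (-((s : ℤ) + (k : ℤ) * ((n : ℤ) - (x : ℤ))))

/-- `[y]_θ = (1 - θ^y)/(1 - θ)` (real power). -/
noncomputable def qnumT (θ y : ℝ) : ℝ := (1 - θ ^ y) / (1 - θ)

/-- The θ-factorial `[n]_θ!`. -/
noncomputable def qfacT (θ : ℝ) (n : ℕ) : ℝ := ∏ j ∈ Finset.Icc 1 n, qnumT θ (j : ℝ)

/-- The θ-binomial coefficient `[y choose n]_θ`. -/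
noncomputable def qbinomT (θ y : ℝ) (n : ℕ) : ℝ :=
  (∏ i ∈ Finset.range n, qnumT θ (y - (i : ℝ))) / qfacT θ n

/-!
Write `n = x + w`, so that `w` counts black draws, and put `θ = q^{-k}`. The claimed law is
`(q^{-s})^x (1-θ)^w ∏_{j<w} [s/k + j]_θ` times the Gaussian binomial `[x+w choose x]_θ`.
Since `1 - q^{-(s+kj)} = (1-θ)[s/k + j]_θ` and `q^{-(s+k(w+1))} = q^{-s} θ^{w+1}`, the urn's
one-step recursion for this product is exactly the q-Pascal rule
`[x+w+2 choose x+1]_θ = [x+w+1 choose x+1]_θ + θ^{w+1} [x+w+1 choose x]_θ`.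
-/

open Finset

section QAnalogs

variable {θ : ℝ}

lemma qnumT_add (hθ : 0 < θ) (a b : ℝ) : qnumT θ (a + b) = qnumT θ a + θ ^ a * qnumT θ b := by
  simp only [qnumT, Real.rpow_add hθ]
  ring

lemma qnumT_natCast_ne_zero (hθ0 : 0 ≤ θ) (hθ1 : θ ≠ 1) {m : ℕ} (hm : m ≠ 0) :
    qnumT θ m ≠ 0 := by
  rw [qnumT, Real.rpow_natCast]
  exact div_ne_zero (sub_ne_zero.2 fun h => hθ1 ((pow_eq_one_iff_of_nonneg hθ0 hm).1 h.symm))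
    (sub_ne_zero.2 hθ1.symm)

@[simp]
lemma qfacT_zero (θ : ℝ) : qfacT θ 0 = 1 := by
  simp [qfacT]

lemma qfacT_succ (θ : ℝ) (m : ℕ) : qfacT θ (m + 1) = qfacT θ m * qnumT θ ((m : ℝ) + 1) := by
  rw [qfacT, prod_Icc_succ_top (by omega), ← qfacT]
  push_cast
  rfl

lemma qfacT_ne_zero (hθ0 : 0 ≤ θ) (hθ1 : θ ≠ 1) (m : ℕ) : qfacT θ m ≠ 0 :=
  prod_ne_zero_iff.2 fun j hj =>
    qnumT_natCast_ne_zero hθ0 hθ1 (by have := (mem_Icc.1 hj).1; omega)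

lemma qbinomT_add_sub_one (θ y : ℝ) (w : ℕ) :
    qbinomT θ (y + w - 1) w = (∏ j ∈ range w, qnumT θ (y + j)) / qfacT θ w := by
  rw [qbinomT, ← prod_range_reflect (fun j => qnumT θ (y + j))]
  congr 1
  refine prod_congr rfl fun i hi => ?_
  have := mem_range.1 hi
  rw [Nat.cast_sub (by omega), Nat.cast_sub (by omega)]
  push_cast
  ring_nf

noncomputable def qGauss (θ : ℝ) (x w : ℕ) : ℝ := qfacT θ (x + w) / (qfacT θ x * qfacT θ w)

lemma qGauss_zero_left (hθ0 : 0 ≤ θ) (hθ1 : θ ≠ 1) (w : ℕ) : qGauss θ 0 w = 1 := by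
  simp [qGauss, qfacT_ne_zero hθ0 hθ1]

lemma qGauss_zero_right (hθ0 : 0 ≤ θ) (hθ1 : θ ≠ 1) (x : ℕ) : qGauss θ x 0 = 1 := by
  simp [qGauss, qfacT_ne_zero hθ0 hθ1]

lemma qGauss_succ_succ (hθ0 : 0 < θ) (hθ1 : θ ≠ 1) (x w : ℕ) :
    qGauss θ (x + 1) (w + 1) = qGauss θ (x + 1) w + θ ^ (w + 1) * qGauss θ x (w + 1) := by
  have hnum : qnumT θ (((x + 1 + w : ℕ) : ℝ) + 1) =
      qnumT θ ((w : ℝ) + 1) + θ ^ (w + 1) * qnumT θ ((x : ℝ) + 1) := by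
    rw [show ((x + 1 + w : ℕ) : ℝ) + 1 = ((w + 1 : ℕ) : ℝ) + ((x : ℝ) + 1) by push_cast; ring,
      qnumT_add hθ0, Real.rpow_natCast]
    push_cast
    rfl
  have hfac := qfacT_ne_zero hθ0.le hθ1
  have hw := qnumT_natCast_ne_zero hθ0.le hθ1 (Nat.succ_ne_zero w)
  have hx := qnumT_natCast_ne_zero hθ0.le hθ1 (Nat.succ_ne_zero x)
  push_cast at hw hx
  rw [qGauss, qGauss, qGauss, show x + (w + 1) = x + 1 + w by ring,
    show x + 1 + (w + 1) = x + 1 + w + 1 by ring, qfacT_succ θ (x + 1 + w), hnum,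
    qfacT_succ θ w, qfacT_succ θ x]
  field_simp

end QAnalogs

section Urn

variable (q : ℝ) (s k : ℕ)

lemma urnW_eq_zero_of_lt {n x : ℕ} (h : n < x) : urnW q s k n x = 0 := by
  induction n generalizing x with
  | zero => obtain ⟨x, rfl⟩ := Nat.exists_eq_succ_of_ne_zero h.ne'; simp [urnW]
  | succ n ih =>
    obtain ⟨x, rfl⟩ := Nat.exists_eq_succ_of_ne_zero (Nat.ne_zero_of_lt h)
    simp [urnW, ih (show n < x + 1 by omega), ih (show n < x by omega)]

lemma urnW_succ_self (n : ℕ) :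
    urnW q s k (n + 1) (n + 1) = urnW q s k n n * q ^ (-(s : ℤ)) := by
  simp [urnW, urnW_eq_zero_of_lt q s k (Nat.lt_succ_self n)]

lemma urnW_add_succ_succ (x w : ℕ) :
    urnW q s k (x + 1 + (w + 1)) (x + 1) =
      urnW q s k (x + 1 + w) (x + 1) * (1 - q ^ (-((s : ℤ) + k * w))) +
        urnW q s k (x + (w + 1)) x * q ^ (-((s : ℤ) + k * (w + 1 : ℕ))) := by
  rw [show x + 1 + (w + 1) = x + 1 + w + 1 by ring, urnW, show x + (w + 1) = x + 1 + w by ring]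
  push_cast
  ring_nf

end Urn

section Exponents

variable {q : ℝ} (s k : ℕ)

lemma zpow_neg_add_mul (hq : q ≠ 0) (m : ℕ) :
    q ^ (-((s : ℤ) + k * m)) = q ^ (-(s : ℤ)) * (q ^ (-(k : ℤ))) ^ m := by
  rw [← zpow_natCast, ← zpow_mul, ← zpow_add₀ hq]
  ring_nf

lemma zpow_neg_add_mul_eq_rpow (hq : 0 < q) (hk : k ≠ 0) (m : ℕ) :
    q ^ (-((s : ℤ) + k * m)) = (q ^ (-(k : ℤ))) ^ ((s : ℝ) / k + m) := by
  rw [← Real.rpow_intCast, ← Real.rpow_intCast, ← Real.rpow_mul hq.le]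
  congr 1
  push_cast
  field_simp

lemma one_sub_zpow_neg_add_mul (hq : 1 < q) (hk : k ≠ 0) (m : ℕ) :
    1 - q ^ (-((s : ℤ) + k * m)) =
      (1 - q ^ (-(k : ℤ))) * qnumT (q ^ (-(k : ℤ))) ((s : ℝ) / k + m) := by
  have hθ : q ^ (-(k : ℤ)) < 1 := zpow_lt_one_of_neg₀ hq (by omega)
  rw [zpow_neg_add_mul_eq_rpow s k (by linarith) hk, qnumT, mul_div_cancel₀ _ (by linarith)]

end Exponents

theorem urnW_add_eq {q : ℝ} (hq : 1 < q) (s : ℕ) {k : ℕ} (hk : k ≠ 0) (x w : ℕ) :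
    urnW q s k (x + w) x =
      (q ^ (-(s : ℤ))) ^ x * (1 - q ^ (-(k : ℤ))) ^ w *
        (∏ j ∈ range w, qnumT (q ^ (-(k : ℤ))) ((s : ℝ) / k + j)) *
          qGauss (q ^ (-(k : ℤ))) x w := by
  have hθ0 : 0 < q ^ (-(k : ℤ)) := zpow_pos (by linarith) _
  have hθ1 : q ^ (-(k : ℤ)) ≠ 1 := (zpow_lt_one_of_neg₀ hq (by omega)).ne
  induction x generalizing w with
  | zero =>
    induction w with
    | zero => simp [urnW, qGauss]
    | succ w ih =>
      rw [zero_add] at ih ⊢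
      rw [urnW, ih, one_sub_zpow_neg_add_mul s k hq hk, prod_range_succ,
        qGauss_zero_left hθ0.le hθ1, qGauss_zero_left hθ0.le hθ1]
      ring
  | succ x ihx =>
    induction w with
    | zero =>
      have hx0 := ihx 0
      rw [add_zero] at hx0 ⊢
      rw [urnW_succ_self, hx0, qGauss_zero_right hθ0.le hθ1, qGauss_zero_right hθ0.le hθ1]
      ring
    | succ w ihw =>
      rw [urnW_add_succ_succ, ihw, ihx, one_sub_zpow_neg_add_mul s k hq hk,
        zpow_neg_add_mul s k (by linarith), qGauss_succ_succ hθ0 hθ1, prod_range_succ]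
      ring

theorem qpolya_infinite_white_pmf (q : ℝ) (hq : 1 < q) (k s : ℕ) (hk : 1 ≤ k)
    (n x : ℕ) (hx : x ≤ n) :
    urnW q s k n x =
      q ^ (-((s : ℤ) * (x : ℤ))) * (1 - q ^ (-(k : ℤ))) ^ (n - x) *
        qbinomT (q ^ (-(k : ℤ))) ((s : ℝ) / (k : ℝ) + (n : ℝ) - (x : ℝ) - 1) (n - x) *
        (qfacT (q ^ (-(k : ℤ))) n / qfacT (q ^ (-(k : ℤ))) x) := by
  obtain ⟨w, rfl⟩ := Nat.exists_eq_add_of_le hx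
  rw [urnW_add_eq hq s (by omega), Nat.add_sub_cancel_left, Nat.cast_add,
    show (s : ℝ) / k + (x + w) - x - 1 = s / k + w - 1 by ring, qbinomT_add_sub_one,
    neg_mul_eq_neg_mul, zpow_mul, zpow_natCast, qGauss]
  ring
end
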